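/- Let u : ℝ × ℝⁿ → ℝⁿ be smooth and suppose there exists a continuously differentiable h : ℝ × ℝⁿ → ℝ such that ∂ₜu + (u·∇)u = −∇h everywhere (isentropic flow). Let x : ℝ → ℝⁿ be a streamline, i.e. x′(t) = u(t, x(t)), and let v, w : ℝ → ℝⁿ satisfy the linearized flow equations v′(t) = D_x u(t, x(t)) v(t) and w′(t) = D_x u(t, x(t)) w(t). Then the function t ↦ ω(t, x(t))(v(t), w(t)) is constant. -/

import Mathlib

open scoped RealInnerProductSpace

/-- The vorticity 2-form `ω(t,x)(v,w) = ⟨D_x u v, w⟩ − ⟨D_x u w, v⟩` of a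
time-dependent velocity field. -/
noncomputable def vorticity2Form {n : ℕ}
    (u : ℝ × EuclideanSpace ℝ (Fin n) → EuclideanSpace ℝ (Fin n))
    (t : ℝ) (x v w : EuclideanSpace ℝ (Fin n)) : ℝ :=
  ⟪fderiv ℝ (fun y => u (t, y)) x v, w⟫ - ⟪fderiv ℝ (fun y => u (t, y)) x w, v⟫

section VortAux

variable {n : ℕ}

local notation "E" => EuclideanSpace ℝ (Fin n)

/-- inclusion `e ↦ (0, e)` as a CLM -/
noncomputable def vortJ (n : ℕ) : E →L[ℝ] ℝ × E :=
  (0 : E →L[ℝ] ℝ).prod (ContinuousLinearMap.id ℝ E)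

@[simp] lemma vortJ_apply (e : E) : vortJ n e = (0, e) := rfl

end VortAux

section Main

variable {n : ℕ}

local notation "E" => EuclideanSpace ℝ (Fin n)

theorem vort_main
    (u : ℝ × E → E)
    (hu : ContDiff ℝ (⊤ : ℕ∞) u)
    (h : ℝ × E → ℝ) (hh : ContDiff ℝ 1 h)
    (euler : ∀ (t : ℝ) (x : E),
      deriv (fun τ => u (τ, x)) t + fderiv ℝ (fun y => u (t, y)) x (u (t, x))
        = -gradient (fun y => h (t, y)) x)
    (x : ℝ → E) (hx : ∀ t, HasDerivAt x (u (t, x t)) t)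
    (v w : ℝ → E)
    (hv : ∀ t, HasDerivAt v (fderiv ℝ (fun y => u (t, y)) (x t) (v t)) t)
    (hw : ∀ t, HasDerivAt w (fderiv ℝ (fun y => u (t, y)) (x t) (w t)) t) :
    ∀ t₁ t₂ : ℝ,
      vorticity2Form u t₁ (x t₁) (v t₁) (w t₁) =
      vorticity2Form u t₂ (x t₂) (v t₂) (w t₂) := by
  have hud : Differentiable ℝ u := hu.differentiable (by simp)
  set Du : ℝ × E → (ℝ × E) →L[ℝ] E := fderiv ℝ u with hDu_def
  have hDuc : ContDiff ℝ (⊤ : ℕ∞) Du := hu.fderiv_right (by simp)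
  have hDud : Differentiable ℝ Du := hDuc.differentiable (by simp)
  set D2u : ℝ × E → (ℝ × E) →L[ℝ] (ℝ × E) →L[ℝ] E := fderiv ℝ Du with hD2u_def
  -- partial derivative in space
  have hpart : ∀ (t : ℝ) (y : E),
      HasFDerivAt (fun z => u (t, z)) ((Du (t, y)).comp (vortJ n)) y := by
    intro t y
    exact (hud (t, y)).hasFDerivAt.comp y
      (HasFDerivAt.prodMk (hasFDerivAt_const t y) (hasFDerivAt_id y))
  -- time derivative
  have htime : ∀ (t : ℝ) (y : E),
      HasDerivAt (fun τ => u (τ, y)) (Du (t, y) (1, 0)) t := by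
    intro t y
    have h1 : HasDerivAt (fun τ : ℝ => ((τ, y) : ℝ × E)) ((1 : ℝ), (0 : E)) t :=
      HasDerivAt.prodMk (hasDerivAt_id t) (hasDerivAt_const t y)
    exact (hud (t, y)).hasFDerivAt.comp_hasDerivAt t h1
  -- Euler in terms of full derivative
  have heuler : ∀ (t : ℝ) (y : E),
      gradient (fun z => h (t, z)) y = -(Du (t, y) (1, u (t, y))) := by
    intro t y
    have he := euler t y
    rw [(htime t y).deriv, (hpart t y).fderiv] at he
    have hsum : Du (t, y) (1, 0) + (Du (t, y)).comp (vortJ n) (u (t, y))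
        = Du (t, y) (1, u (t, y)) := by
      rw [ContinuousLinearMap.comp_apply, vortJ_apply, ← map_add]
      norm_num
    rw [hsum] at he
    rw [he, neg_neg]
  -- symmetry of the second derivative of u
  have hsymmu : ∀ (p : ℝ × E) (q r : ℝ × E), D2u p q r = D2u p r q := fun p =>
    second_derivative_symmetric (fun y => (hud y).hasFDerivAt) (hDud p).hasFDerivAt
  -- differentiability of h in space
  have hhd : ∀ (t : ℝ), Differentiable ℝ (fun y : E => h (t, y)) := by
    intro t
    exact (hh.differentiable one_ne_zero).comp (Differentiable.prodMk (differentiable_const t) differentiable_id)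
  -- the key symmetry
  have key : ∀ (t : ℝ) (e e' : E),
      ⟪D2u (t, x t) (1, u (t, x t)) (0, e) + Du (t, x t) (0, Du (t, x t) (0, e)), e'⟫
        = ⟪D2u (t, x t) (1, u (t, x t)) (0, e') + Du (t, x t) (0, Du (t, x t) (0, e')), e⟫ := by
    intro t e e'
    set x₀ := x t with hx₀
    set p₀ : ℝ × E := (t, x₀) with hp₀
    set u₀ := u p₀ with hu₀
    -- derivative of y ↦ Du (t, y)
    have hc : HasFDerivAt (fun y : E => Du (t, y)) ((D2u p₀).comp (vortJ n)) x₀ :=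
      (hDud p₀).hasFDerivAt.comp x₀ (HasFDerivAt.prodMk (hasFDerivAt_const t x₀) (hasFDerivAt_id x₀))
    -- derivative of y ↦ (1, u (t, y))
    have hd : HasFDerivAt (fun y : E => ((1 : ℝ), u (t, y)))
        ((0 : E →L[ℝ] ℝ).prod ((Du p₀).comp (vortJ n))) x₀ :=
      HasFDerivAt.prodMk (hasFDerivAt_const (1 : ℝ) x₀) (hpart t x₀)
    set DG : E →L[ℝ] E :=
      -((Du p₀).comp ((0 : E →L[ℝ] ℝ).prod ((Du p₀).comp (vortJ n)))
        + ((D2u p₀).comp (vortJ n)).flip (1, u (t, x₀))) with hDG_def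
    have hGder : HasFDerivAt (fun y : E => -(Du (t, y) (1, u (t, y)))) DG x₀ :=
      (hc.clm_apply hd).neg
    have hDGapp : ∀ a : E, DG a = -(Du p₀ (0, Du p₀ (0, a)) + D2u p₀ (0, a) (1, u₀)) := by
      intro a
      simp [hDG_def, hu₀, hp₀]
    -- gradient of h (t, ·) as a CLM-valued map
    have hgrad : ∀ y : E,
        HasFDerivAt (fun z => h (t, z)) (innerSL ℝ (-(Du (t, y) (1, u (t, y))))) y := by
      intro y
      have h2 := (hhd t y).hasFDerivAt
      have h4 : (InnerProductSpace.toDual ℝ E) (gradient (fun z => h (t, z)) y)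
          = fderiv ℝ (fun z => h (t, z)) y :=
        (InnerProductSpace.toDual ℝ E).apply_symm_apply (fderiv ℝ (fun z => h (t, z)) y)
      have h3 : fderiv ℝ (fun z => h (t, z)) y
          = innerSL ℝ (-(Du (t, y) (1, u (t, y)))) := by
        ext a
        rw [← h4, InnerProductSpace.toDual_apply_apply, heuler t y, innerSL_apply_apply]
      rwa [h3] at h2
    have hφ : HasFDerivAt (fun y : E => innerSL ℝ (-(Du (t, y) (1, u (t, y)))))
        (((innerSL ℝ : E →L[ℝ] E →L[ℝ] ℝ)).comp DG) x₀ :=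
      ((innerSL ℝ : E →L[ℝ] E →L[ℝ] ℝ)).hasFDerivAt.comp x₀ hGder
    have hsym := second_derivative_symmetric hgrad hφ e e'
    simp only [ContinuousLinearMap.comp_apply, innerSL_apply_apply, hDGapp,
      inner_neg_left, inner_add_left] at hsym
    rw [hsymmu p₀ (1, u₀) (0, e), hsymmu p₀ (1, u₀) (0, e')]
    simp only [inner_add_left]
    linarith
  -- rewrite hv, hw
  have hv' : ∀ t, HasDerivAt v (Du (t, x t) (0, v t)) t := by
    intro t
    have := hv t
    rwa [(hpart t (x t)).fderiv, ContinuousLinearMap.comp_apply, vortJ_apply] at this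
  have hw' : ∀ t, HasDerivAt w (Du (t, x t) (0, w t)) t := by
    intro t
    have := hw t
    rwa [(hpart t (x t)).fderiv, ContinuousLinearMap.comp_apply, vortJ_apply] at this
  -- the scalar function is constant
  have hF : ∀ t, HasDerivAt
      (fun s : ℝ => ⟪Du (s, x s) (0, v s), w s⟫ - ⟪Du (s, x s) (0, w s), v s⟫) 0 t := by
    intro t
    have hc : HasDerivAt (fun s : ℝ => Du (s, x s)) (D2u (t, x t) (1, u (t, x t))) t :=
      (hDud (t, x t)).hasFDerivAt.comp_hasDerivAt t (HasDerivAt.prodMk (hasDerivAt_id t) (hx t))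
    have hdv : HasDerivAt (fun s : ℝ => (((0 : ℝ), v s) : ℝ × E))
        ((0 : ℝ), Du (t, x t) (0, v t)) t := HasDerivAt.prodMk (hasDerivAt_const t (0 : ℝ)) (hv' t)
    have hdw : HasDerivAt (fun s : ℝ => (((0 : ℝ), w s) : ℝ × E))
        ((0 : ℝ), Du (t, x t) (0, w t)) t := HasDerivAt.prodMk (hasDerivAt_const t (0 : ℝ)) (hw' t)
    have h1 : HasDerivAt (fun s : ℝ => Du (s, x s) (0, v s))
        (D2u (t, x t) (1, u (t, x t)) (0, v t) + Du (t, x t) (0, Du (t, x t) (0, v t))) t :=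
      hc.clm_apply hdv
    have h2 : HasDerivAt (fun s : ℝ => Du (s, x s) (0, w s))
        (D2u (t, x t) (1, u (t, x t)) (0, w t) + Du (t, x t) (0, Du (t, x t) (0, w t))) t :=
      hc.clm_apply hdw
    have h3 := (HasDerivAt.inner ℝ h1 (hw' t)).sub (HasDerivAt.inner ℝ h2 (hv' t))
    have hzero :
        (⟪Du (t, x t) (0, v t), Du (t, x t) (0, w t)⟫
          + ⟪D2u (t, x t) (1, u (t, x t)) (0, v t) + Du (t, x t) (0, Du (t, x t) (0, v t)), w t⟫)
        - (⟪Du (t, x t) (0, w t), Du (t, x t) (0, v t)⟫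
          + ⟪D2u (t, x t) (1, u (t, x t)) (0, w t) + Du (t, x t) (0, Du (t, x t) (0, w t)), v t⟫)
        = 0 := by
      rw [key t (v t) (w t), real_inner_comm (Du (t, x t) (0, v t))]
      ring
    rw [hzero] at h3
    exact h3
  have hconst : ∀ a b : ℝ,
      (fun s : ℝ => ⟪Du (s, x s) (0, v s), w s⟫ - ⟪Du (s, x s) (0, w s), v s⟫) a
      = (fun s : ℝ => ⟪Du (s, x s) (0, v s), w s⟫ - ⟪Du (s, x s) (0, w s), v s⟫) b :=
    fun a b =>
    is_const_of_deriv_eq_zero (fun s => (hF s).differentiableAt) (fun s => (hF s).deriv) a b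
  intro t₁ t₂
  have hvort : ∀ t : ℝ, vorticity2Form u t (x t) (v t) (w t)
      = ⟪Du (t, x t) (0, v t), w t⟫ - ⟪Du (t, x t) (0, w t), v t⟫ := by
    intro t
    rw [vorticity2Form, (hpart t (x t)).fderiv]
    simp
  rw [hvort t₁, hvort t₂]
  exact hconst t₁ t₂

end Main

/-- Transport law `D̄ₜω = 0` for isentropic flow: the vorticity 2-form is invariant
when evaluated on vectors advected along a streamline. -/
theorem vorticity_invariant_isentropic (n : ℕ)
    (u : ℝ × EuclideanSpace ℝ (Fin n) → EuclideanSpace ℝ (Fin n))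
    (hu : ContDiff ℝ (⊤ : ℕ∞) u)
    (h : ℝ × EuclideanSpace ℝ (Fin n) → ℝ) (hh : ContDiff ℝ 1 h)
    (euler : ∀ (t : ℝ) (x : EuclideanSpace ℝ (Fin n)),
      deriv (fun τ => u (τ, x)) t + fderiv ℝ (fun y => u (t, y)) x (u (t, x))
        = -gradient (fun y => h (t, y)) x)
    (x : ℝ → EuclideanSpace ℝ (Fin n))
    (hx : ∀ t, HasDerivAt x (u (t, x t)) t)
    (v w : ℝ → EuclideanSpace ℝ (Fin n))
    (hv : ∀ t, HasDerivAt v (fderiv ℝ (fun y => u (t, y)) (x t) (v t)) t)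
    (hw : ∀ t, HasDerivAt w (fderiv ℝ (fun y => u (t, y)) (x t) (w t)) t) :
    ∀ t₁ t₂ : ℝ,
      vorticity2Form u t₁ (x t₁) (v t₁) (w t₁) =
      vorticity2Form u t₂ (x t₂) (v t₂) (w t₂) := by
  exact vort_main u hu h hh euler x hx v w hv hw
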